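/- Let a ≠ 0, 0 < s ≤ 1, α² + a² = s², |β| ≤ 1, |γ| ≤ s/20, and D the closed unit disc in ℝ². Define v_±(x,y) = α + βy + γx ± s^{−1}γ²(20 − 4x² − 4y²). Then Q(v₊) ≤ 0 and Q(v₋) ≥ 0 on D, where Q(v) = ∂/∂x[(v² + y² + a²)^{−1/2} ∂v/∂x] + 2 ∂²v/∂y². -/

import Mathlib

/-!
For `v = α + β y + γ x + D (20 - 4x² - 4y²)` and `F = v² + y² + a²` one computes
`Q(v) = F^{-1/2} (-8D - v v_x² / F) - 16D`. On the disc, `F ≥ s²/16`: either `|y| ≥ s/4`, or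
`|α| ≥ 3s/5` and then `|v| ≥ s/4`, or `a² = s² - α² ≥ 16s²/25`. Together with `v² ≤ F` this
gives `s |v| ≤ 4F`, and `v_x² ≤ 2γ²`, so `|v| v_x² ≤ 8 (γ²/s) F` and the bracket is nonpositive
for `D = γ²/s`. Finally `Q(-v) = -Q(v)`, and `v₋` is `-v₊` with `(α, β, γ)` negated.
-/

/-- The divergence-form quasilinear operator
`Q(v) = ∂/∂x[(v² + y² + a²)^{-1/2} ∂v/∂x] + 2 ∂²v/∂y²`. -/
noncomputable def Qop (a : ℝ) (v : ℝ × ℝ → ℝ) (p : ℝ × ℝ) : ℝ :=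
  fderiv ℝ (fun q => ((v q) ^ 2 + q.2 ^ 2 + a ^ 2) ^ (-(1 : ℝ) / 2)
      * fderiv ℝ v q ((1 : ℝ), (0 : ℝ))) p ((1 : ℝ), (0 : ℝ))
  + 2 * fderiv ℝ (fun q => fderiv ℝ v q ((0 : ℝ), (1 : ℝ))) p ((0 : ℝ), (1 : ℝ))

open ContinuousLinearMap

theorem Qop_neg (a : ℝ) (v : ℝ × ℝ → ℝ) (p : ℝ × ℝ) :
    Qop a (fun q => -v q) p = -Qop a v p := by
  simp only [Qop, fderiv_fun_neg, neg_apply, neg_sq, mul_neg]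
  ring

theorem Qop_eq_of_hasFDerivAt {a : ℝ} {v vx vy : ℝ × ℝ → ℝ} {p : ℝ × ℝ} {Lx Ly : ℝ × ℝ →L[ℝ] ℝ}
    (hv : ∀ q, HasFDerivAt v (vx q • fst ℝ ℝ ℝ + vy q • snd ℝ ℝ ℝ) q)
    (hvx : HasFDerivAt vx Lx p) (hvy : HasFDerivAt vy Ly p)
    (hF : v p ^ 2 + p.2 ^ 2 + a ^ 2 ≠ 0) :
    Qop a v p = (v p ^ 2 + p.2 ^ 2 + a ^ 2) ^ (-(1 : ℝ) / 2)
        * (Lx (1, 0) - v p * vx p ^ 2 / (v p ^ 2 + p.2 ^ 2 + a ^ 2)) + 2 * Ly (0, 1) := by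
  have hpartial : ∀ q w, fderiv ℝ v q w = vx q * w.1 + vy q * w.2 := fun q w => by
    simp [(hv q).fderiv]
  simp only [Qop, hpartial, mul_one, mul_zero, add_zero, zero_add]
  have hF' : HasFDerivAt (fun q : ℝ × ℝ => v q ^ 2 + q.2 ^ 2 + a ^ 2)
      ((2 * v p) • (vx p • fst ℝ ℝ ℝ + vy p • snd ℝ ℝ ℝ) + (2 * p.2) • snd ℝ ℝ ℝ) p := by
    simpa using ((hv p).pow 2).add (hasFDerivAt_snd.pow 2) |>.add_const (a ^ 2)
  rw [((hF'.rpow_const (Or.inl hF)).fun_mul hvx).fderiv, hvy.fderiv]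
  simp only [add_apply, smul_apply, coe_fst', coe_snd', smul_eq_mul]
  rw [Real.rpow_sub_one hF]
  field_simp
  ring

def barrier (A B C D : ℝ) (q : ℝ × ℝ) : ℝ :=
  A + B * q.2 + C * q.1 + D * (20 - 4 * q.1 ^ 2 - 4 * q.2 ^ 2)

theorem hasFDerivAt_barrier (A B C D : ℝ) (q : ℝ × ℝ) :
    HasFDerivAt (barrier A B C D)
      ((C - 8 * D * q.1) • fst ℝ ℝ ℝ + (B - 8 * D * q.2) • snd ℝ ℝ ℝ) q := by
  have hx : HasFDerivAt (fun q : ℝ × ℝ => q.1) (fst ℝ ℝ ℝ) q := hasFDerivAt_fst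
  have hy : HasFDerivAt (fun q : ℝ × ℝ => q.2) (snd ℝ ℝ ℝ) q := hasFDerivAt_snd
  have h := (((hy.const_mul B).const_add A).add (hx.const_mul C)).add
    ((((hx.pow 2).const_mul 4).const_sub 20).sub ((hy.pow 2).const_mul 4) |>.const_mul D)
  refine h.congr_fderiv ?_
  ext <;> simp <;> ring

theorem Qop_barrier {a : ℝ} (A B C D : ℝ) {p : ℝ × ℝ}
    (hF : barrier A B C D p ^ 2 + p.2 ^ 2 + a ^ 2 ≠ 0) :
    Qop a (barrier A B C D) p = (barrier A B C D p ^ 2 + p.2 ^ 2 + a ^ 2) ^ (-(1 : ℝ) / 2)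
        * (-8 * D - barrier A B C D p * (C - 8 * D * p.1) ^ 2
            / (barrier A B C D p ^ 2 + p.2 ^ 2 + a ^ 2)) - 16 * D := by
  have hvx : HasFDerivAt (fun q : ℝ × ℝ => C - 8 * D * q.1) (-((8 * D) • fst ℝ ℝ ℝ)) p :=
    (hasFDerivAt_fst.const_mul (8 * D)).const_sub C
  have hvy : HasFDerivAt (fun q : ℝ × ℝ => B - 8 * D * q.2) (-((8 * D) • snd ℝ ℝ ℝ)) p :=
    (hasFDerivAt_snd.const_mul (8 * D)).const_sub B
  rw [Qop_eq_of_hasFDerivAt (hasFDerivAt_barrier A B C D) hvx hvy hF]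
  simp only [neg_apply, smul_apply, coe_fst', coe_snd', smul_eq_mul]
  ring

theorem sq_div_sixteen_le_sq_add_sq_add_sq {a s α β w y : ℝ} (hα : α ^ 2 + a ^ 2 = s ^ 2)
    (hβ : |β| ≤ 1) (hw : |w| ≤ s / 10) :
    s ^ 2 / 16 ≤ (α + β * y + w) ^ 2 + y ^ 2 + a ^ 2 := by
  rcases le_or_gt (s ^ 2 / 16) (y ^ 2) with hy | hy
  · nlinarith [sq_nonneg (α + β * y + w), sq_nonneg a]
  have hs : 0 ≤ s := by linarith [abs_nonneg w]
  have hβy : |β * y| < s / 4 := by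
    have hy' : |y| < s / 4 := abs_lt_of_sq_lt_sq (by linarith) (by positivity)
    rw [abs_mul]
    nlinarith [abs_nonneg β, abs_nonneg y]
  rcases le_or_gt (3 * s / 5) |α| with hα' | hα'
  · have hsum : |α| ≤ |α + β * y + w| + |β * y| + |w| := by
      calc |α| = |α + β * y + w - β * y - w| := by ring_nf
        _ ≤ |α + β * y + w| + |β * y| + |w| := by
          linarith [abs_sub (α + β * y + w - β * y) w, abs_sub (α + β * y + w) (β * y)]
    have h : s / 4 ≤ |α + β * y + w| := by linarith
    nlinarith [sq_abs (α + β * y + w), sq_nonneg a]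
  · nlinarith [sq_abs α, abs_nonneg α]

theorem mul_abs_le_four_mul {s v F : ℝ} (hv : v ^ 2 ≤ F) (hs : s ^ 2 / 16 ≤ F) :
    s * |v| ≤ 4 * F := by
  nlinarith [sq_nonneg (|v| - s / 4), sq_abs v]

section Disc

variable {s γ : ℝ} {p : ℝ × ℝ}

theorem inv_mul_sq_le (hs : 0 < s) (hγ : |γ| ≤ s / 20) : s⁻¹ * γ ^ 2 ≤ |γ| / 20 := by
  rw [inv_mul_le_iff₀ hs, ← sq_abs]
  nlinarith [abs_nonneg γ]

theorem abs_le_one_of_sq_add_sq_le_one (hp : p.1 ^ 2 + p.2 ^ 2 ≤ 1) : |p.1| ≤ 1 :=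
  abs_le_one_iff_mul_self_le_one.mpr (by nlinarith [sq_nonneg p.2])

theorem abs_linear_add_bump_le (hs : 0 < s) (hγ : |γ| ≤ s / 20) (hp : p.1 ^ 2 + p.2 ^ 2 ≤ 1) :
    |γ * p.1 + s⁻¹ * γ ^ 2 * (20 - 4 * p.1 ^ 2 - 4 * p.2 ^ 2)| ≤ s / 10 := by
  have hc := inv_mul_sq_le hs hγ
  have hc0 : 0 ≤ s⁻¹ * γ ^ 2 := by positivity
  have hx := abs_le_one_of_sq_add_sq_le_one hp
  have hlin : |γ * p.1| ≤ s / 20 := by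
    rw [abs_mul]; nlinarith [abs_nonneg γ, abs_nonneg p.1]
  have hbump : |s⁻¹ * γ ^ 2 * (20 - 4 * p.1 ^ 2 - 4 * p.2 ^ 2)| ≤ s / 20 := by
    rw [abs_of_nonneg (mul_nonneg hc0 (by nlinarith))]
    nlinarith [sq_nonneg p.1, sq_nonneg p.2]
  linarith [abs_add_le (γ * p.1) (s⁻¹ * γ ^ 2 * (20 - 4 * p.1 ^ 2 - 4 * p.2 ^ 2))]

theorem sq_sub_le_two_mul_sq (hs : 0 < s) (hγ : |γ| ≤ s / 20) (hp : p.1 ^ 2 + p.2 ^ 2 ≤ 1) :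
    (γ - 8 * (s⁻¹ * γ ^ 2) * p.1) ^ 2 ≤ 2 * γ ^ 2 := by
  have hc := inv_mul_sq_le hs hγ
  have hx := abs_le_one_of_sq_add_sq_le_one hp
  have h : |γ - 8 * (s⁻¹ * γ ^ 2) * p.1| ≤ 7 / 5 * |γ| := by
    calc |γ - 8 * (s⁻¹ * γ ^ 2) * p.1| ≤ |γ| + 8 * (s⁻¹ * γ ^ 2) * |p.1| := by
          have := abs_sub γ (8 * (s⁻¹ * γ ^ 2) * p.1)
          rwa [abs_mul, abs_of_nonneg (by positivity : (0 : ℝ) ≤ 8 * (s⁻¹ * γ ^ 2))] at this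
      _ ≤ 7 / 5 * |γ| := by nlinarith [abs_nonneg p.1, abs_nonneg γ]
  nlinarith [sq_abs γ, sq_abs (γ - 8 * (s⁻¹ * γ ^ 2) * p.1),
    abs_nonneg (γ - 8 * (s⁻¹ * γ ^ 2) * p.1)]

end Disc

section Barrier

variable {a s α β γ : ℝ} {p : ℝ × ℝ}

theorem sq_div_sixteen_le_barrier_sq_add (hs : 0 < s) (hα : α ^ 2 + a ^ 2 = s ^ 2)
    (hβ : |β| ≤ 1) (hγ : |γ| ≤ s / 20) (hp : p.1 ^ 2 + p.2 ^ 2 ≤ 1) :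
    s ^ 2 / 16 ≤ barrier α β γ (s⁻¹ * γ ^ 2) p ^ 2 + p.2 ^ 2 + a ^ 2 := by
  have h := sq_div_sixteen_le_sq_add_sq_add_sq (y := p.2) hα hβ (abs_linear_add_bump_le hs hγ hp)
  convert h using 3
  simp only [barrier]
  ring

theorem abs_barrier_mul_sq_le (hs : 0 < s) (hα : α ^ 2 + a ^ 2 = s ^ 2)
    (hβ : |β| ≤ 1) (hγ : |γ| ≤ s / 20) (hp : p.1 ^ 2 + p.2 ^ 2 ≤ 1) :
    |barrier α β γ (s⁻¹ * γ ^ 2) p| * (γ - 8 * (s⁻¹ * γ ^ 2) * p.1) ^ 2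
      ≤ 8 * (s⁻¹ * γ ^ 2) * (barrier α β γ (s⁻¹ * γ ^ 2) p ^ 2 + p.2 ^ 2 + a ^ 2) := by
  have hF := sq_div_sixteen_le_barrier_sq_add hs hα hβ hγ hp
  have hsv := mul_abs_le_four_mul (v := barrier α β γ (s⁻¹ * γ ^ 2) p)
    (by nlinarith [sq_nonneg p.2, sq_nonneg a]) hF
  calc |barrier α β γ (s⁻¹ * γ ^ 2) p| * (γ - 8 * (s⁻¹ * γ ^ 2) * p.1) ^ 2
      ≤ |barrier α β γ (s⁻¹ * γ ^ 2) p| * (2 * γ ^ 2) :=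
        mul_le_mul_of_nonneg_left (sq_sub_le_two_mul_sq hs hγ hp) (abs_nonneg _)
    _ = 2 * (s⁻¹ * γ ^ 2) * (s * |barrier α β γ (s⁻¹ * γ ^ 2) p|) := by
        field_simp
    _ ≤ 2 * (s⁻¹ * γ ^ 2) * (4 * (barrier α β γ (s⁻¹ * γ ^ 2) p ^ 2 + p.2 ^ 2 + a ^ 2)) := by
        gcongr
    _ = _ := by ring

theorem Qop_barrier_nonpos (hs : 0 < s) (hα : α ^ 2 + a ^ 2 = s ^ 2)
    (hβ : |β| ≤ 1) (hγ : |γ| ≤ s / 20) (hp : p.1 ^ 2 + p.2 ^ 2 ≤ 1) :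
    Qop a (barrier α β γ (s⁻¹ * γ ^ 2)) p ≤ 0 := by
  have hF : 0 < barrier α β γ (s⁻¹ * γ ^ 2) p ^ 2 + p.2 ^ 2 + a ^ 2 :=
    lt_of_lt_of_le (by positivity) (sq_div_sixteen_le_barrier_sq_add hs hα hβ hγ hp)
  have hkey := abs_barrier_mul_sq_le hs hα hβ hγ hp
  rw [Qop_barrier _ _ _ _ hF.ne']
  set c := s⁻¹ * γ ^ 2
  set v := barrier α β γ c p
  set F := v ^ 2 + p.2 ^ 2 + a ^ 2
  have hbracket : -8 * c - v * (γ - 8 * c * p.1) ^ 2 / F ≤ 0 := by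
    rw [sub_nonpos, neg_mul, neg_le, ← neg_div, div_le_iff₀ hF]
    nlinarith [neg_abs_le v, sq_nonneg (γ - 8 * c * p.1)]
  have hc : 0 ≤ c := by positivity
  nlinarith [mul_nonpos_of_nonneg_of_nonpos (Real.rpow_nonneg hF.le (-(1 : ℝ) / 2)) hbracket]

end Barrier

theorem stmt_7_general (a s α β γ : ℝ) (hs0 : 0 < s)
    (hα : α ^ 2 + a ^ 2 = s ^ 2) (hβ : |β| ≤ 1) (hγ : |γ| ≤ s / 20) :
    ∀ p : ℝ × ℝ, p.1 ^ 2 + p.2 ^ 2 ≤ 1 →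
      Qop a (fun q => α + β * q.2 + γ * q.1
          + s⁻¹ * γ ^ 2 * (20 - 4 * q.1 ^ 2 - 4 * q.2 ^ 2)) p ≤ 0 ∧
      0 ≤ Qop a (fun q => α + β * q.2 + γ * q.1
          - s⁻¹ * γ ^ 2 * (20 - 4 * q.1 ^ 2 - 4 * q.2 ^ 2)) p := by
  intro p hp
  refine ⟨Qop_barrier_nonpos hs0 hα hβ hγ hp, ?_⟩
  have hminus : (fun q : ℝ × ℝ => α + β * q.2 + γ * q.1
      - s⁻¹ * γ ^ 2 * (20 - 4 * q.1 ^ 2 - 4 * q.2 ^ 2))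
      = fun q => -barrier (-α) (-β) (-γ) (s⁻¹ * (-γ) ^ 2) q := by
    funext q
    simp only [barrier]
    ring
  rw [hminus, Qop_neg, neg_nonneg]
  exact Qop_barrier_nonpos hs0 (by rwa [neg_sq]) (by rwa [abs_neg]) (by rwa [abs_neg]) hp

/-- Proposition 4.8: `v₊` is a supersolution and `v₋` a subsolution of `Q(v) = 0`
on the closed unit disc. -/
theorem stmt_7 (a s α β γ : ℝ) (ha : a ≠ 0) (hs0 : 0 < s) (hs1 : s ≤ 1)
    (hα : α ^ 2 + a ^ 2 = s ^ 2) (hβ : |β| ≤ 1) (hγ : |γ| ≤ s / 20) :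
    ∀ p : ℝ × ℝ, p.1 ^ 2 + p.2 ^ 2 ≤ 1 →
      Qop a (fun q => α + β * q.2 + γ * q.1
          + s⁻¹ * γ ^ 2 * (20 - 4 * q.1 ^ 2 - 4 * q.2 ^ 2)) p ≤ 0 ∧
      0 ≤ Qop a (fun q => α + β * q.2 + γ * q.1
          - s⁻¹ * γ ^ 2 * (20 - 4 * q.1 ^ 2 - 4 * q.2 ^ 2)) p :=
  stmt_7_general a s α β γ hs0 hα hβ hγ
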